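/- Let 𝔤 be an n-dimensional real Lie algebra with basis v₁,…,vₙ such that 𝔥 := span{v₁,…,v_{n−1}} is an Abelian ideal and [vₙ, vᵢ] = Σ_{k=1}^{n−1} d_{ki} v_k for a real matrix D = (d_{ij}), equipped with the pseudo-Riemannian metric g = Σ_{i=1}^{n−2} ε_i v^i⊗v^i + v^{n−1}⊙v^n (ε_i ∈ {±1}), so that 𝔥^⊥ = span{v_{n−1}} is null (isotropic case). Set e_i := v_i for i ≤ n−2, e_{n−1} := (v_{n−1}+v_n)/√2 and e_n := (v_{n−1}−v_n)/√2, an orthonormal basis with ε_{n−1} = 1, ε_n = −1. Then the Dirac element taken with respect to this orthonormal basis satisfies 𝒟 = −(√2/8) Σ_{1≤i<j≤n−2} (ε_i d_{ij} − ε_j d_{ji}) · Θ(e^i ∧ e^j ∧ (e^{n−1} − e^n)) + (1/4) Σ_{i=1}^{n−2} ε_i d_{i,n−1} · Θ(e^i ∧ e^{n−1} ∧ e^n) − (√2/4) tr(D) · Θ(e^{n−1} − e^n) in Cl(𝔤,g). -/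

import Mathlib

/-!
STATEMENT 2: Dirac element of an isotropic almost Abelian pseudo-Riemannian
Lie algebra 𝔤 = 𝔥 ⋊_D ℝ.
-/

noncomputable section

open Finset

variable {n : ℕ} {𝔤 : Type} [LieRing 𝔤] [LieAlgebra ℝ 𝔤]

/-- The pseudo-Riemannian metric `g` on `𝔤` for which the basis `e` is orthonormal with
signs `ε`. -/
def gform {N : ℕ} (e : Module.Basis (Fin N) ℝ 𝔤) (ε : Fin N → ℝ) : LinearMap.BilinForm ℝ 𝔤 :=
  ∑ i, ε i • LinearMap.BilinForm.linMulLin (e.coord i) (e.coord i)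

/-- The quadratic form `x ↦ −g(x,x)` defining the Clifford algebra `Cl(𝔤,g)`. -/
def Qform {N : ℕ} (e : Module.Basis (Fin N) ℝ 𝔤) (ε : Fin N → ℝ) : QuadraticForm ℝ 𝔤 :=
  LinearMap.BilinMap.toQuadraticMap (-(gform e ε))

/-- `Θ` applied to a one-form with components `α i = α(eᵢ)`. -/
def theta1 {N : ℕ} (e : Module.Basis (Fin N) ℝ 𝔤) (ε : Fin N → ℝ) (α : Fin N → ℝ) :
    CliffordAlgebra (Qform e ε) :=
  ∑ i, (ε i * α i) • CliffordAlgebra.ι (Qform e ε) (e i)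

/-- `Θ` applied to a three-form with components `α i j k = α(eᵢ,eⱼ,e_k)`. -/
def theta3 {N : ℕ} (e : Module.Basis (Fin N) ℝ 𝔤) (ε : Fin N → ℝ) (α : Fin N → Fin N → Fin N → ℝ) :
    CliffordAlgebra (Qform e ε) :=
  ∑ i, ∑ j, ∑ k,
    if i < j ∧ j < k then
      (ε i * ε j * ε k * α i j k) •
        (CliffordAlgebra.ι (Qform e ε) (e i) * CliffordAlgebra.ι (Qform e ε) (e j) *
          CliffordAlgebra.ι (Qform e ε) (e k))
    else 0

/-- Levi-Civita coefficients `Γ_{kij}` from the Koszul formula. -/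
def Γcoef {N : ℕ} (ε : Fin N → ℝ) (c : Fin N → Fin N → Fin N → ℝ) (k i j : Fin N) : ℝ :=
  (1 / 2) * (ε j * c j k i - ε k * c k i j + ε i * c i j k)

/-- The Dirac element `𝒟 = Σ_k ε_k e_k · ((1/2) Σ_{i<j} ε_i ε_j Γ_{kij} e_i e_j)`. -/
def dirac {N : ℕ} (e : Module.Basis (Fin N) ℝ 𝔤) (ε : Fin N → ℝ) (c : Fin N → Fin N → Fin N → ℝ) :
    CliffordAlgebra (Qform e ε) :=
  ∑ k, ε k •
    (CliffordAlgebra.ι (Qform e ε) (e k) *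
      ((1 / 2 : ℝ) • ∑ i, ∑ j,
        if i < j then
          (ε i * ε j * Γcoef ε c k i j) •
            (CliffordAlgebra.ι (Qform e ε) (e i) * CliffordAlgebra.ι (Qform e ε) (e j))
        else 0))

/-- Components of the coframe covector `e^i`: `e^i(e_a) = δᵢₐ`. -/
def coComp {N : ℕ} (i a : Fin N) : ℝ := if a = i then 1 else 0

/-- Components of a wedge `α ∧ β ∧ γ` of three one-forms with components `α`, `β`, `γ`. -/
def wedge3 {N : ℕ} (α β γ : Fin N → ℝ) (a b k : Fin N) : ℝ :=
  α a * (β b * γ k - β k * γ b) - α b * (β a * γ k - β k * γ a) +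
    α k * (β a * γ b - β b * γ a)

lemma gform_basis {N : ℕ} (e : Module.Basis (Fin N) ℝ 𝔤) (ε : Fin N → ℝ) (a b : Fin N) :
    gform e ε (e a) (e b) = if a = b then ε a else 0 := by
  simp only [gform, LinearMap.sum_apply, LinearMap.smul_apply,
    LinearMap.BilinForm.linMulLin_apply, Module.Basis.coord_apply, Module.Basis.repr_self,
    Finsupp.single_apply, Finset.sum_apply]
  by_cases h : a = b
  · subst h
    rw [Finset.sum_eq_single a] <;> simp +contextual [eq_comm]
  · rw [if_neg h]
    refine Finset.sum_eq_zero fun i _ => ?_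
    by_cases h1 : a = i <;> by_cases h2 : b = i
    · exact absurd (h1.trans h2.symm) h
    all_goals simp_all [smul_eq_mul]

lemma Qform_basis {N : ℕ} (e : Module.Basis (Fin N) ℝ 𝔤) (ε : Fin N → ℝ) (a : Fin N) :
    Qform e ε (e a) = -ε a := by
  simp [Qform, LinearMap.BilinMap.toQuadraticMap_apply, gform_basis]

lemma polar_basis {N : ℕ} (e : Module.Basis (Fin N) ℝ 𝔤) (ε : Fin N → ℝ) (a b : Fin N) (h : a ≠ b) :
    QuadraticMap.polar (Qform e ε) (e a) (e b) = 0 := by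
  rw [Qform, LinearMap.BilinMap.polar_toQuadraticMap]
  simp [gform_basis, h, Ne.symm h]

/-- Shorthand for the Clifford generators. -/
def Ev {N : ℕ} (e : Module.Basis (Fin N) ℝ 𝔤) (ε : Fin N → ℝ) (a : Fin N) :
    CliffordAlgebra (Qform e ε) :=
  CliffordAlgebra.ι (Qform e ε) (e a)

lemma E_swap {N : ℕ} (e : Module.Basis (Fin N) ℝ 𝔤) (ε : Fin N → ℝ) {a b : Fin N} (h : a ≠ b) :
    Ev e ε a * Ev e ε b = -(Ev e ε b * Ev e ε a) := by
  have h2 := CliffordAlgebra.ι_mul_ι_add_swap (Q := Qform e ε) (e a) (e b)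
  rw [polar_basis e ε a b h] at h2
  simp only [map_zero] at h2
  exact eq_neg_of_add_eq_zero_left h2

lemma E_sq {N : ℕ} (e : Module.Basis (Fin N) ℝ 𝔤) (ε : Fin N → ℝ) (a : Fin N)
    (x : CliffordAlgebra (Qform e ε)) :
    Ev e ε a * Ev e ε a * x = (-ε a) • x := by
  rw [Ev, CliffordAlgebra.ι_sq_scalar, Qform_basis, ← Algebra.smul_def]

lemma E_sandwich {N : ℕ} (e : Module.Basis (Fin N) ℝ 𝔤) (ε : Fin N → ℝ) {x a : Fin N} (h : x ≠ a) :
    Ev e ε x * Ev e ε a * Ev e ε x = ε x • Ev e ε a := by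
  rw [E_swap e ε h, neg_mul, mul_assoc, Ev, Ev, CliffordAlgebra.ι_sq_scalar, Qform_basis,
    ← Algebra.commutes, ← Algebra.smul_def, ← Ev, neg_smul]
  exact neg_neg _

lemma E_rot {N : ℕ} (e : Module.Basis (Fin N) ℝ 𝔤) (ε : Fin N → ℝ) {x a b : Fin N}
    (hax : x ≠ a) (hbx : x ≠ b) :
    Ev e ε x * Ev e ε a * Ev e ε b = Ev e ε a * Ev e ε b * Ev e ε x := by
  rw [E_swap e ε hax, neg_mul, mul_assoc, E_swap e ε hbx, mul_neg, neg_neg, ← mul_assoc]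

lemma E_swap_front {N : ℕ} (e : Module.Basis (Fin N) ℝ 𝔤) (ε : Fin N → ℝ) {x a : Fin N} (b : Fin N)
    (h : x ≠ a) :
    Ev e ε x * Ev e ε a * Ev e ε b = -(Ev e ε a * Ev e ε x * Ev e ε b) := by
  rw [E_swap e ε h, neg_mul]

/-- Split a sum over `Fin (n+2)` into the small part, `P` and `Q`. -/
lemma sum_split {M : Type*} [AddCommMonoid M] {n : ℕ} (f : Fin (n + 2) → M) :
    ∑ a, f a = (∑ i : Fin n, f i.castSucc.castSucc) + f (Fin.last n).castSucc
      + f (Fin.last (n + 1)) := by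
  rw [Fin.sum_univ_castSucc, Fin.sum_univ_castSucc]

lemma not_last_lt {m : ℕ} (x : Fin (m + 1)) : ¬ (Fin.last m < x) := not_lt.mpr (Fin.le_last x)

lemma sum_cancel {M : Type*} [AddCommGroup M] [Module ℝ M] {m : ℕ} (f : Fin m → Fin m → M)
    (h : ∀ k i, k ≠ i → f k i + f i k = 0) : ∑ k, ∑ i, f k i = ∑ k, f k k := by
  have key : ∑ k, ∑ i, (f k i + f i k) = ∑ k, (f k k + f k k) := by
    refine Finset.sum_congr rfl fun k _ => ?_
    refine Finset.sum_eq_single k (fun i _ hik => h k i (Ne.symm hik)) ?_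
    exact fun hk => absurd (Finset.mem_univ k) hk
  have key2 : ∑ k, ∑ i, (f k i + f i k)
      = (∑ k, ∑ i, f k i) + (∑ k, ∑ i, f k i) := by
    simp_rw [Finset.sum_add_distrib]
    rw [Finset.sum_comm (f := fun i k => f i k)]
  have h2 : (∑ k, ∑ i, f k i) + (∑ k, ∑ i, f k i) = (∑ k, f k k) + (∑ k, f k k) := by
    rw [← key2, key, Finset.sum_add_distrib]
  have h3 := congrArg (fun z => (2⁻¹ : ℝ) • z) h2
  simpa [smul_add, ← two_smul ℝ, smul_smul] using h3

lemma ite_sub_zero {M : Type*} [SubtractionMonoid M] (p : Prop) [Decidable p] (a b : M) :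
    (if p then a - b else 0) = (if p then a else 0) - (if p then b else 0) := by
  split <;> simp

lemma ite_add_zero' {M : Type*} [AddMonoid M] (p : Prop) [Decidable p] (a b : M) :
    (if p then a + b else 0) = (if p then a else 0) + (if p then b else 0) := by
  split <;> simp

lemma ite_neg_zero {M : Type*} [SubtractionMonoid M] (p : Prop) [Decidable p] (a : M) :
    (if p then -a else 0) = -(if p then a else 0) := by
  split <;> simp

lemma sum_ite_ite_eq {M : Type*} [AddCommMonoid M] {m : ℕ} (j : Fin m) (p : Fin m → Prop)
    [DecidablePred p] (f : Fin m → M) :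
    (∑ x, if p x then if x = j then f x else 0 else 0) = if p j then f j else 0 := by
  rw [Finset.sum_eq_single j]
  · simp
  · intro x _ hxj
    simp [hxj]
  · intro h
    exact absurd (Finset.mem_univ j) h

lemma sum_ite_ite_ite_eq {M : Type*} [AddCommMonoid M] {m : ℕ} (j : Fin m) (p : Fin m → Prop)
    (q : Prop) [DecidablePred p] [Decidable q] (f : Fin m → M) :
    (∑ x, if p x then if q then if x = j then f x else 0 else 0 else 0)
      = if p j then if q then f j else 0 else 0 := by
  rw [Finset.sum_eq_single j]
  · simp
  · intro x _ hxj
    simp [hxj]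
  · intro h
    exact absurd (Finset.mem_univ j) h

lemma sum_ite_eq_ite {M : Type*} [AddCommMonoid M] {m : ℕ} (j : Fin m) (p : Fin m → Prop)
    [DecidablePred p] (f : Fin m → M) :
    (∑ x, if x = j then if p x then f x else 0 else 0) = if p j then f j else 0 := by
  rw [Finset.sum_eq_single j]
  · simp
  · intro x _ hxj
    simp [hxj]
  · intro h
    exact absurd (Finset.mem_univ j) h

set_option maxHeartbeats 2000000 in
theorem dirac_formula
    (eB : Module.Basis (Fin (n + 2)) ℝ 𝔤) (ε : Fin (n + 2) → ℝ)
    (D : Fin (n + 1) → Fin (n + 1) → ℝ)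
    (c : Fin (n + 2) → Fin (n + 2) → Fin (n + 2) → ℝ)
    (hε : ∀ i, ε i = 1 ∨ ε i = -1)
    (hεp : ε ((Fin.last n).castSucc) = 1)
    (hεq : ε (Fin.last (n + 1)) = -1)
    (hanti : ∀ m a b, c m a b = -c m b a)
    (hss : ∀ m, ∀ i j : Fin n, c m i.castSucc.castSucc j.castSucc.castSucc = 0)
    (hPP : ∀ m, c m ((Fin.last n).castSucc) ((Fin.last n).castSucc) = 0)
    (hQQ : ∀ m, c m (Fin.last (n + 1)) (Fin.last (n + 1)) = 0)
    (h1 : ∀ k i : Fin n, c k.castSucc.castSucc i.castSucc.castSucc ((Fin.last n).castSucc)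
      = -(Real.sqrt 2 / 2 * D k.castSucc i.castSucc))
    (h2 : ∀ i : Fin n, c ((Fin.last n).castSucc) i.castSucc.castSucc ((Fin.last n).castSucc)
      = -(1 / 2 * D (Fin.last n) i.castSucc))
    (h3 : ∀ i : Fin n, c (Fin.last (n + 1)) i.castSucc.castSucc ((Fin.last n).castSucc)
      = -(1 / 2 * D (Fin.last n) i.castSucc))
    (h4 : ∀ k i : Fin n, c k.castSucc.castSucc i.castSucc.castSucc (Fin.last (n + 1))
      = Real.sqrt 2 / 2 * D k.castSucc i.castSucc)
    (h5 : ∀ i : Fin n, c ((Fin.last n).castSucc) i.castSucc.castSucc (Fin.last (n + 1))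
      = 1 / 2 * D (Fin.last n) i.castSucc)
    (h6 : ∀ i : Fin n, c (Fin.last (n + 1)) i.castSucc.castSucc (Fin.last (n + 1))
      = 1 / 2 * D (Fin.last n) i.castSucc)
    (h7 : ∀ k : Fin n, c k.castSucc.castSucc ((Fin.last n).castSucc) (Fin.last (n + 1))
      = D k.castSucc (Fin.last n))
    (h8 : c ((Fin.last n).castSucc) ((Fin.last n).castSucc) (Fin.last (n + 1))
      = Real.sqrt 2 / 2 * D (Fin.last n) (Fin.last n))
    (h9 : c (Fin.last (n + 1)) ((Fin.last n).castSucc) (Fin.last (n + 1))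
      = Real.sqrt 2 / 2 * D (Fin.last n) (Fin.last n)) :
    dirac eB ε c =
      (-(Real.sqrt 2 / 8)) •
          (∑ i : Fin n, ∑ j : Fin n,
            if i < j then
              (ε i.castSucc.castSucc * D i.castSucc j.castSucc -
                  ε j.castSucc.castSucc * D j.castSucc i.castSucc) •
                theta3 eB ε
                  (wedge3 (coComp i.castSucc.castSucc) (coComp j.castSucc.castSucc)
                    (fun a => coComp ((Fin.last n).castSucc) a - coComp (Fin.last (n + 1)) a))
            else 0)
        + (1 / 4 : ℝ) •
            (∑ i : Fin n,
              (ε i.castSucc.castSucc * D i.castSucc (Fin.last n)) •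
                theta3 eB ε
                  (wedge3 (coComp i.castSucc.castSucc) (coComp ((Fin.last n).castSucc))
                    (coComp (Fin.last (n + 1)))))
        - (Real.sqrt 2 / 4 * ∑ k, D k k) •
            theta1 eB ε
              (fun a => coComp ((Fin.last n).castSucc) a - coComp (Fin.last (n + 1)) a) := by
  have step0 : dirac eB ε c = ∑ k, ∑ i, ∑ j,
      (if i < j then
        (ε k * ((1/2) * (ε i * ε j * Γcoef ε c k i j))) • (Ev eB ε k * Ev eB ε i * Ev eB ε j)
      else 0) := by
    simp only [dirac, mul_smul_comm, Finset.mul_sum, mul_ite, mul_zero, Finset.smul_sum,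
      smul_ite, smul_zero, smul_smul, Ev, mul_assoc]

  have Gsss : ∀ k i j : Fin n, Γcoef ε c k.castSucc.castSucc i.castSucc.castSucc j.castSucc.castSucc = 0 := by
    intro k i j
    simp only [Γcoef, hss]
    ring
  have GssP : ∀ k i : Fin n, Γcoef ε c k.castSucc.castSucc i.castSucc.castSucc (Fin.last n).castSucc
      = Real.sqrt 2 / 4 * (ε k.castSucc.castSucc * D k.castSucc i.castSucc + ε i.castSucc.castSucc * D i.castSucc k.castSucc) := by
    intro k i
    simp only [Γcoef]
    rw [hss, h1 k i, hanti i.castSucc.castSucc (Fin.last n).castSucc k.castSucc.castSucc, h1 i k, hεp]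
    ring
  have GssQ : ∀ k i : Fin n, Γcoef ε c k.castSucc.castSucc i.castSucc.castSucc (Fin.last (n + 1))
      = -(Real.sqrt 2 / 4 * (ε k.castSucc.castSucc * D k.castSucc i.castSucc + ε i.castSucc.castSucc * D i.castSucc k.castSucc)) := by
    intro k i
    simp only [Γcoef]
    rw [hss, h4 k i, hanti i.castSucc.castSucc (Fin.last (n + 1)) k.castSucc.castSucc, h4 i k, hεq]
    ring
  have GsPQ : ∀ k : Fin n, Γcoef ε c k.castSucc.castSucc (Fin.last n).castSucc (Fin.last (n + 1)) = -(1 / 2 * (ε k.castSucc.castSucc * D k.castSucc (Fin.last n))) := by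
    intro k
    simp only [Γcoef]
    rw [h3 k, h7 k, hanti (Fin.last n).castSucc (Fin.last (n + 1)) k.castSucc.castSucc, h5 k, hεp, hεq]
    ring
  have GPss : ∀ i j : Fin n, Γcoef ε c (Fin.last n).castSucc i.castSucc.castSucc j.castSucc.castSucc
      = Real.sqrt 2 / 4 * (ε j.castSucc.castSucc * D j.castSucc i.castSucc - ε i.castSucc.castSucc * D i.castSucc j.castSucc) := by
    intro i j
    simp only [Γcoef]
    rw [hss, hanti j.castSucc.castSucc (Fin.last n).castSucc i.castSucc.castSucc, h1 j i, h1 i j, hεp]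
    ring
  have GQss : ∀ i j : Fin n, Γcoef ε c (Fin.last (n + 1)) i.castSucc.castSucc j.castSucc.castSucc
      = -(Real.sqrt 2 / 4 * (ε j.castSucc.castSucc * D j.castSucc i.castSucc - ε i.castSucc.castSucc * D i.castSucc j.castSucc)) := by
    intro i j
    simp only [Γcoef]
    rw [hss, hanti j.castSucc.castSucc (Fin.last (n + 1)) i.castSucc.castSucc, h4 j i, h4 i j, hεq]
    ring
  have GPsP : ∀ i : Fin n, Γcoef ε c (Fin.last n).castSucc i.castSucc.castSucc (Fin.last n).castSucc = 1 / 2 * D (Fin.last n) i.castSucc := by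
    intro i
    simp only [Γcoef]
    rw [hanti (Fin.last n).castSucc (Fin.last n).castSucc i.castSucc.castSucc, h2 i, hPP, hεp]
    ring
  have GQsP : ∀ i : Fin n, Γcoef ε c (Fin.last (n + 1)) i.castSucc.castSucc (Fin.last n).castSucc
      = 1 / 2 * (ε i.castSucc.castSucc * D i.castSucc (Fin.last n) - D (Fin.last n) i.castSucc) := by
    intro i
    simp only [Γcoef]
    rw [hanti (Fin.last n).castSucc (Fin.last (n + 1)) i.castSucc.castSucc, h5 i, h3 i, h7 i, hεp, hεq]
    ring
  have GPsQ : ∀ i : Fin n, Γcoef ε c (Fin.last n).castSucc i.castSucc.castSucc (Fin.last (n + 1))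
      = -(1 / 2 * (ε i.castSucc.castSucc * D i.castSucc (Fin.last n) + D (Fin.last n) i.castSucc)) := by
    intro i
    simp only [Γcoef]
    rw [hanti (Fin.last (n + 1)) (Fin.last n).castSucc i.castSucc.castSucc, h3 i, h5 i, hanti i.castSucc.castSucc (Fin.last (n + 1)) (Fin.last n).castSucc, h7 i, hεp, hεq]
    ring
  have GQsQ : ∀ i : Fin n, Γcoef ε c (Fin.last (n + 1)) i.castSucc.castSucc (Fin.last (n + 1)) = 1 / 2 * D (Fin.last n) i.castSucc := by
    intro i
    simp only [Γcoef]
    rw [hanti (Fin.last (n + 1)) (Fin.last (n + 1)) i.castSucc.castSucc, h6 i, hQQ, hεq]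
    ring
  have GPPQ : Γcoef ε c (Fin.last n).castSucc (Fin.last n).castSucc (Fin.last (n + 1)) = -(Real.sqrt 2 / 2 * D (Fin.last n) (Fin.last n)) := by
    simp only [Γcoef]
    rw [hPP, h8, hanti (Fin.last n).castSucc (Fin.last (n + 1)) (Fin.last n).castSucc, h8, hεp, hεq]
    ring
  have GQPQ : Γcoef ε c (Fin.last (n + 1)) (Fin.last n).castSucc (Fin.last (n + 1)) = Real.sqrt 2 / 2 * D (Fin.last n) (Fin.last n) := by
    simp only [Γcoef]
    rw [hanti (Fin.last (n + 1)) (Fin.last (n + 1)) (Fin.last n).castSucc, h9, hQQ, hεq]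
    ring

  have hε2 : ∀ a, ε a * ε a = 1 := by
    intro a
    rcases hε a with h | h <;> rw [h] <;> norm_num
  have hne_ss : ∀ {i j : Fin n}, i ≠ j → i.castSucc.castSucc ≠ j.castSucc.castSucc := by
    intro i j h
    simpa [Fin.castSucc_inj] using h
  have hPs : ∀ x : Fin n, (Fin.last n).castSucc ≠ x.castSucc.castSucc := by
    intro x
    exact (Fin.castSucc_lt_castSucc_iff.mpr (Fin.castSucc_lt_last x)).ne'
  have hQs : ∀ x : Fin n, Fin.last (n + 1) ≠ x.castSucc.castSucc := by
    intro x
    exact (Fin.castSucc_lt_last _).ne'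
  have hQP : Fin.last (n + 1) ≠ (Fin.last n).castSucc := (Fin.castSucc_lt_last _).ne'
  have hPQ : (Fin.last n).castSucc ≠ Fin.last (n + 1) := (Fin.castSucc_lt_last _).ne
  have hsP : ∀ x : Fin n, x.castSucc.castSucc ≠ (Fin.last n).castSucc := fun x => Ne.symm (hPs x)
  have hsQ : ∀ x : Fin n, x.castSucc.castSucc ≠ Fin.last (n + 1) := fun x => Ne.symm (hQs x)
  have hlc : ∀ x : Fin n, Fin.last n ≠ x.castSucc := fun x => (Fin.castSucc_lt_last x).ne'
  have hcl : ∀ x : Fin n, x.castSucc ≠ Fin.last n := fun x => (Fin.castSucc_lt_last x).ne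
  have hlc2 : ∀ x : Fin (n + 1), Fin.last (n + 1) ≠ x.castSucc := fun x => (Fin.castSucc_lt_last x).ne'
  have hcl2 : ∀ x : Fin (n + 1), x.castSucc ≠ Fin.last (n + 1) := fun x => (Fin.castSucc_lt_last x).ne
  rw [step0]
  simp only [sum_split]
  simp only [Fin.castSucc_lt_castSucc_iff, Fin.castSucc_lt_last, not_last_lt, lt_irrefl,
    if_true, if_false, Finset.sum_const_zero, add_zero, zero_add]
  simp only [Finset.sum_add_distrib]
  have grpA : (∑ x : Fin n, ∑ x_1 : Fin n, ∑ x_2 : Fin n, if x_1 < x_2 then (ε x.castSucc.castSucc * (1 / 2 * (ε x_1.castSucc.castSucc * ε x_2.castSucc.castSucc * Γcoef ε c x.castSucc.castSucc x_1.castSucc.castSucc x_2.castSucc.castSucc))) • (Ev eB ε x.castSucc.castSucc * Ev eB ε x_1.castSucc.castSucc * Ev eB ε x_2.castSucc.castSucc) else 0) = (0 : CliffordAlgebra (Qform eB ε)) := by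
    refine Finset.sum_eq_zero fun x _ => Finset.sum_eq_zero fun x_1 _ =>
      Finset.sum_eq_zero fun x_2 _ => ?_
    rw [Gsss]
    simp
  have grpB : (∑ x : Fin n, ∑ x_1 : Fin n, (ε x.castSucc.castSucc * (1 / 2 * (ε x_1.castSucc.castSucc * ε (Fin.last n).castSucc * Γcoef ε c x.castSucc.castSucc x_1.castSucc.castSucc (Fin.last n).castSucc))) • (Ev eB ε x.castSucc.castSucc * Ev eB ε x_1.castSucc.castSucc * Ev eB ε (Fin.last n).castSucc)) = (∑ x : Fin n, (-(Real.sqrt 2 / 4) * D x.castSucc x.castSucc) • Ev eB ε (Fin.last n).castSucc) := by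
    have hterm : ∀ a b : Fin n, a ≠ b →
        (ε a.castSucc.castSucc * (1 / 2 * (ε b.castSucc.castSucc * ε (Fin.last n).castSucc * Γcoef ε c a.castSucc.castSucc b.castSucc.castSucc (Fin.last n).castSucc))) •
            (Ev eB ε a.castSucc.castSucc * Ev eB ε b.castSucc.castSucc * Ev eB ε (Fin.last n).castSucc) +
          (ε b.castSucc.castSucc * (1 / 2 * (ε a.castSucc.castSucc * ε (Fin.last n).castSucc * Γcoef ε c b.castSucc.castSucc a.castSucc.castSucc (Fin.last n).castSucc))) •
            (Ev eB ε b.castSucc.castSucc * Ev eB ε a.castSucc.castSucc * Ev eB ε (Fin.last n).castSucc) = 0 := by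
      intro a b hab
      rw [GssP a b, GssP b a, hεp,
        E_swap_front eB ε (Fin.last n).castSucc (hne_ss hab), smul_neg, ← neg_smul, ← add_smul]
      refine smul_eq_zero_of_left ?_ _
      ring
    rw [sum_cancel _ hterm]
    refine Finset.sum_congr rfl fun x _ => ?_
    rw [GssP x x, hεp, E_sq, smul_smul]
    congr 1
    rcases hε x.castSucc.castSucc with h | h <;> rw [h] <;> ring
  have grpC : (∑ x : Fin n, ∑ x_1 : Fin n, (ε x.castSucc.castSucc * (1 / 2 * (ε x_1.castSucc.castSucc * ε (Fin.last (n + 1)) * Γcoef ε c x.castSucc.castSucc x_1.castSucc.castSucc (Fin.last (n + 1))))) • (Ev eB ε x.castSucc.castSucc * Ev eB ε x_1.castSucc.castSucc * Ev eB ε (Fin.last (n + 1)))) = (∑ x : Fin n, (-(Real.sqrt 2 / 4) * D x.castSucc x.castSucc) • Ev eB ε (Fin.last (n + 1))) := by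
    have hterm : ∀ a b : Fin n, a ≠ b →
        (ε a.castSucc.castSucc * (1 / 2 * (ε b.castSucc.castSucc * ε (Fin.last (n + 1)) * Γcoef ε c a.castSucc.castSucc b.castSucc.castSucc (Fin.last (n + 1))))) •
            (Ev eB ε a.castSucc.castSucc * Ev eB ε b.castSucc.castSucc * Ev eB ε (Fin.last (n + 1))) +
          (ε b.castSucc.castSucc * (1 / 2 * (ε a.castSucc.castSucc * ε (Fin.last (n + 1)) * Γcoef ε c b.castSucc.castSucc a.castSucc.castSucc (Fin.last (n + 1))))) •
            (Ev eB ε b.castSucc.castSucc * Ev eB ε a.castSucc.castSucc * Ev eB ε (Fin.last (n + 1))) = 0 := by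
      intro a b hab
      rw [GssQ a b, GssQ b a, hεq,
        E_swap_front eB ε (Fin.last (n + 1)) (hne_ss hab), smul_neg, ← neg_smul, ← add_smul]
      refine smul_eq_zero_of_left ?_ _
      ring
    rw [sum_cancel _ hterm]
    refine Finset.sum_congr rfl fun x _ => ?_
    rw [GssQ x x, hεq, E_sq, smul_smul]
    congr 1
    rcases hε x.castSucc.castSucc with h | h <;> rw [h] <;> ring
  have grpD : (∑ x : Fin n, (ε x.castSucc.castSucc * (1 / 2 * (ε (Fin.last n).castSucc * ε (Fin.last (n + 1)) * Γcoef ε c x.castSucc.castSucc (Fin.last n).castSucc (Fin.last (n + 1))))) • (Ev eB ε x.castSucc.castSucc * Ev eB ε (Fin.last n).castSucc * Ev eB ε (Fin.last (n + 1)))) = (∑ x : Fin n, (1 / 4 * D x.castSucc (Fin.last n)) • (Ev eB ε x.castSucc.castSucc * Ev eB ε (Fin.last n).castSucc * Ev eB ε (Fin.last (n + 1)))) := by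
    refine Finset.sum_congr rfl fun x _ => ?_
    rw [GsPQ x]
    simp only [hεp, hεq]
    congr 1
    rcases hε x.castSucc.castSucc with h | h <;> rw [h] <;> ring
  have grpE : (∑ x : Fin n, ∑ x_1 : Fin n, if x < x_1 then (ε (Fin.last n).castSucc * (1 / 2 * (ε x.castSucc.castSucc * ε x_1.castSucc.castSucc * Γcoef ε c (Fin.last n).castSucc x.castSucc.castSucc x_1.castSucc.castSucc))) • (Ev eB ε (Fin.last n).castSucc * Ev eB ε x.castSucc.castSucc * Ev eB ε x_1.castSucc.castSucc) else 0) = (∑ x : Fin n, ∑ x_1 : Fin n, if x < x_1 then (Real.sqrt 2 / 8 * (ε x.castSucc.castSucc * D x_1.castSucc x.castSucc - ε x_1.castSucc.castSucc * D x.castSucc x_1.castSucc)) • (Ev eB ε x.castSucc.castSucc * Ev eB ε x_1.castSucc.castSucc * Ev eB ε (Fin.last n).castSucc) else 0) := by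
    refine Finset.sum_congr rfl fun x _ => Finset.sum_congr rfl fun x_1 _ => ?_
    split_ifs with hxx
    · rw [GPss x x_1, E_rot eB ε (hPs x) (hPs x_1)]
      simp only [hεp, hεq]
      congr 1
      rcases hε x.castSucc.castSucc with h | h <;> rcases hε x_1.castSucc.castSucc with h' | h' <;>
        rw [h, h'] <;> ring
    · rfl
  have grpF : (∑ x : Fin n, (ε (Fin.last n).castSucc * (1 / 2 * (ε x.castSucc.castSucc * ε (Fin.last n).castSucc * Γcoef ε c (Fin.last n).castSucc x.castSucc.castSucc (Fin.last n).castSucc))) • (Ev eB ε (Fin.last n).castSucc * Ev eB ε x.castSucc.castSucc * Ev eB ε (Fin.last n).castSucc)) = (∑ x : Fin n, (1 / 4 * (ε x.castSucc.castSucc * D (Fin.last n) x.castSucc)) • Ev eB ε x.castSucc.castSucc) := by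
    refine Finset.sum_congr rfl fun x _ => ?_
    rw [GPsP x, E_sandwich eB ε (hPs x), smul_smul]
    simp only [hεp, hεq]
    congr 1
    ring
  have grpG : (∑ x : Fin n, (ε (Fin.last n).castSucc * (1 / 2 * (ε x.castSucc.castSucc * ε (Fin.last (n + 1)) * Γcoef ε c (Fin.last n).castSucc x.castSucc.castSucc (Fin.last (n + 1))))) • (Ev eB ε (Fin.last n).castSucc * Ev eB ε x.castSucc.castSucc * Ev eB ε (Fin.last (n + 1)))) = (∑ x : Fin n, (-(1 / 4) * (D x.castSucc (Fin.last n) + ε x.castSucc.castSucc * D (Fin.last n) x.castSucc)) • (Ev eB ε x.castSucc.castSucc * Ev eB ε (Fin.last n).castSucc * Ev eB ε (Fin.last (n + 1)))) := by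
    refine Finset.sum_congr rfl fun x _ => ?_
    rw [GPsQ x, E_swap_front eB ε (Fin.last (n + 1)) (hPs x), smul_neg, ← neg_smul]
    simp only [hεp, hεq]
    congr 1
    rcases hε x.castSucc.castSucc with h | h <;> rw [h] <;> ring
  have grpH : ((ε (Fin.last n).castSucc * (1 / 2 * (ε (Fin.last n).castSucc * ε (Fin.last (n + 1)) * Γcoef ε c (Fin.last n).castSucc (Fin.last n).castSucc (Fin.last (n + 1))))) • (Ev eB ε (Fin.last n).castSucc * Ev eB ε (Fin.last n).castSucc * Ev eB ε (Fin.last (n + 1)))) = ((-(Real.sqrt 2 / 4) * D (Fin.last n) (Fin.last n)) • Ev eB ε (Fin.last (n + 1))) := by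
    rw [GPPQ, E_sq, smul_smul]
    simp only [hεp, hεq]
    congr 1
    ring
  have grpI : (∑ x : Fin n, ∑ x_1 : Fin n, if x < x_1 then (ε (Fin.last (n + 1)) * (1 / 2 * (ε x.castSucc.castSucc * ε x_1.castSucc.castSucc * Γcoef ε c (Fin.last (n + 1)) x.castSucc.castSucc x_1.castSucc.castSucc))) • (Ev eB ε (Fin.last (n + 1)) * Ev eB ε x.castSucc.castSucc * Ev eB ε x_1.castSucc.castSucc) else 0) = (∑ x : Fin n, ∑ x_1 : Fin n, if x < x_1 then (Real.sqrt 2 / 8 * (ε x.castSucc.castSucc * D x_1.castSucc x.castSucc - ε x_1.castSucc.castSucc * D x.castSucc x_1.castSucc)) • (Ev eB ε x.castSucc.castSucc * Ev eB ε x_1.castSucc.castSucc * Ev eB ε (Fin.last (n + 1))) else 0) := by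
    refine Finset.sum_congr rfl fun x _ => Finset.sum_congr rfl fun x_1 _ => ?_
    split_ifs with hxx
    · rw [GQss x x_1, E_rot eB ε (hQs x) (hQs x_1)]
      simp only [hεp, hεq]
      congr 1
      rcases hε x.castSucc.castSucc with h | h <;> rcases hε x_1.castSucc.castSucc with h' | h' <;>
        rw [h, h'] <;> ring
    · rfl
  have grpJ : (∑ x : Fin n, (ε (Fin.last (n + 1)) * (1 / 2 * (ε x.castSucc.castSucc * ε (Fin.last n).castSucc * Γcoef ε c (Fin.last (n + 1)) x.castSucc.castSucc (Fin.last n).castSucc))) • (Ev eB ε (Fin.last (n + 1)) * Ev eB ε x.castSucc.castSucc * Ev eB ε (Fin.last n).castSucc)) = (∑ x : Fin n, (1 / 4 * (ε x.castSucc.castSucc * D (Fin.last n) x.castSucc - D x.castSucc (Fin.last n))) • (Ev eB ε x.castSucc.castSucc * Ev eB ε (Fin.last n).castSucc * Ev eB ε (Fin.last (n + 1)))) := by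
    refine Finset.sum_congr rfl fun x _ => ?_
    rw [GQsP x, E_rot eB ε (hQs x) hQP]
    simp only [hεp, hεq]
    congr 1
    rcases hε x.castSucc.castSucc with h | h <;> rw [h] <;> ring
  have grpK : (∑ x : Fin n, (ε (Fin.last (n + 1)) * (1 / 2 * (ε x.castSucc.castSucc * ε (Fin.last (n + 1)) * Γcoef ε c (Fin.last (n + 1)) x.castSucc.castSucc (Fin.last (n + 1))))) • (Ev eB ε (Fin.last (n + 1)) * Ev eB ε x.castSucc.castSucc * Ev eB ε (Fin.last (n + 1)))) = (∑ x : Fin n, (-(1 / 4) * (ε x.castSucc.castSucc * D (Fin.last n) x.castSucc)) • Ev eB ε x.castSucc.castSucc) := by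
    refine Finset.sum_congr rfl fun x _ => ?_
    rw [GQsQ x, E_sandwich eB ε (hQs x), smul_smul]
    simp only [hεp, hεq]
    congr 1
    ring
  have grpL : ((ε (Fin.last (n + 1)) * (1 / 2 * (ε (Fin.last n).castSucc * ε (Fin.last (n + 1)) * Γcoef ε c (Fin.last (n + 1)) (Fin.last n).castSucc (Fin.last (n + 1))))) • (Ev eB ε (Fin.last (n + 1)) * Ev eB ε (Fin.last n).castSucc * Ev eB ε (Fin.last (n + 1)))) = ((-(Real.sqrt 2 / 4) * D (Fin.last n) (Fin.last n)) • Ev eB ε (Fin.last n).castSucc) := by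
    rw [GQPQ, E_sandwich eB ε hQP, smul_smul]
    simp only [hεp, hεq]
    congr 1
    ring
  rw [grpA, grpB, grpC, grpD, grpE, grpF, grpG, grpH, grpI, grpJ, grpK, grpL]
  have hT1 : theta1 eB ε (fun a => coComp (Fin.last n).castSucc a - coComp (Fin.last (n + 1)) a) = Ev eB ε (Fin.last n).castSucc + Ev eB ε (Fin.last (n + 1)) := by
    simp only [theta1, Ev, sum_split]
    simp [coComp, hεp, hεq, hsP, hsQ, hPQ, hQP]
  have hT3b : ∀ i : Fin n, theta3 eB ε (wedge3 (coComp i.castSucc.castSucc) (coComp (Fin.last n).castSucc) (coComp (Fin.last (n + 1)))) = (-ε i.castSucc.castSucc) • (Ev eB ε i.castSucc.castSucc * Ev eB ε (Fin.last n).castSucc * Ev eB ε (Fin.last (n + 1))) := by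
    intro i
    simp only [theta3, Ev, sum_split]
    simp [wedge3, coComp, hεp, hεq, hsP, hsQ, hPQ, hQP, Fin.castSucc_inj,
      Fin.castSucc_lt_castSucc_iff, Fin.castSucc_lt_last, not_last_lt, lt_irrefl,
      Finset.sum_ite_eq, Finset.sum_ite_eq', mul_ite, ite_mul, mul_zero, zero_mul,
      mul_one, one_mul, ite_smul, smul_ite, zero_smul, smul_zero]
  have hT3a : ∀ i j : Fin n, i < j → theta3 eB ε (wedge3 (coComp i.castSucc.castSucc) (coComp j.castSucc.castSucc) (fun a => coComp (Fin.last n).castSucc a - coComp (Fin.last (n + 1)) a)) = (ε i.castSucc.castSucc * ε j.castSucc.castSucc) • (Ev eB ε i.castSucc.castSucc * Ev eB ε j.castSucc.castSucc * Ev eB ε (Fin.last n).castSucc) + (ε i.castSucc.castSucc * ε j.castSucc.castSucc) • (Ev eB ε i.castSucc.castSucc * Ev eB ε j.castSucc.castSucc * Ev eB ε (Fin.last (n + 1))) := by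
    intro i j hij
    simp only [theta3, Ev, sum_split]
    simp only [wedge3, coComp, Fin.castSucc_inj, Fin.castSucc_lt_castSucc_iff,
      Fin.castSucc_lt_last, not_last_lt, lt_irrefl, hsP, hsQ, hPQ, hQP, hPs, hQs, hlc, hcl,
      hlc2, hcl2, if_true, if_false, and_true, and_false, true_and, false_and,
      mul_zero, zero_mul, mul_one, one_mul, sub_zero, zero_sub, sub_self, add_zero, zero_add,
      neg_zero, mul_neg, neg_neg, mul_sub, sub_mul, mul_ite, ite_mul, ite_smul, smul_ite,
      zero_smul, smul_zero, sub_smul, neg_smul, smul_neg, Finset.sum_sub_distrib,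
      Finset.sum_neg_distrib, Finset.sum_add_distrib, Finset.sum_const_zero,
      ite_sub_zero, ite_add_zero', ite_neg_zero,
      sum_ite_ite_eq, sum_ite_ite_ite_eq, sum_ite_eq_ite, hij, lt_asymm hij, hij.ne, hij.ne']
    simp [sum_ite_ite_eq, sum_ite_ite_ite_eq, sum_ite_eq_ite, ite_sub_zero, ite_add_zero',
      ite_neg_zero, hεp, hεq, hij, lt_asymm hij]
  have hDGJ : ((∑ x : Fin n, (1 / 4 * D x.castSucc (Fin.last n)) • (Ev eB ε x.castSucc.castSucc * Ev eB ε (Fin.last n).castSucc * Ev eB ε (Fin.last (n + 1)))) + (∑ x : Fin n, (-(1 / 4) * (D x.castSucc (Fin.last n) + ε x.castSucc.castSucc * D (Fin.last n) x.castSucc)) • (Ev eB ε x.castSucc.castSucc * Ev eB ε (Fin.last n).castSucc * Ev eB ε (Fin.last (n + 1))))) + (∑ x : Fin n, (1 / 4 * (ε x.castSucc.castSucc * D (Fin.last n) x.castSucc - D x.castSucc (Fin.last n))) • (Ev eB ε x.castSucc.castSucc * Ev eB ε (Fin.last n).castSucc * Ev eB ε (Fin.last (n + 1)))) = (∑ x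 : Fin n, (-(1 / 4) * D x.castSucc (Fin.last n)) • (Ev eB ε x.castSucc.castSucc * Ev eB ε (Fin.last n).castSucc * Ev eB ε (Fin.last (n + 1)))) := by
    rw [← Finset.sum_add_distrib, ← Finset.sum_add_distrib]
    refine Finset.sum_congr rfl fun x _ => ?_
    rw [← add_smul, ← add_smul]
    congr 1
    ring
  have hFK : (∑ x : Fin n, (1 / 4 * (ε x.castSucc.castSucc * D (Fin.last n) x.castSucc)) • Ev eB ε x.castSucc.castSucc) + (∑ x : Fin n, (-(1 / 4) * (ε x.castSucc.castSucc * D (Fin.last n) x.castSucc)) • Ev eB ε x.castSucc.castSucc) = 0 := by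
    rw [← Finset.sum_add_distrib]
    refine Finset.sum_eq_zero fun x _ => ?_
    rw [← add_smul]
    refine smul_eq_zero_of_left ?_ _
    ring
  have hBL : (∑ x : Fin n, (-(Real.sqrt 2 / 4) * D x.castSucc x.castSucc) • Ev eB ε (Fin.last n).castSucc) + ((-(Real.sqrt 2 / 4) * D (Fin.last n) (Fin.last n)) • Ev eB ε (Fin.last n).castSucc) = ((-(Real.sqrt 2 / 4 * ∑ k : Fin (n + 1), D k k)) • Ev eB ε (Fin.last n).castSucc) := by
    rw [← Finset.sum_smul, ← add_smul]
    congr 1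
    rw [Fin.sum_univ_castSucc (f := fun k => D k k)]
    simp [Finset.mul_sum, mul_add, neg_add, neg_mul]
    abel
  have hCH : (∑ x : Fin n, (-(Real.sqrt 2 / 4) * D x.castSucc x.castSucc) • Ev eB ε (Fin.last (n + 1))) + ((-(Real.sqrt 2 / 4) * D (Fin.last n) (Fin.last n)) • Ev eB ε (Fin.last (n + 1))) = ((-(Real.sqrt 2 / 4 * ∑ k : Fin (n + 1), D k k)) • Ev eB ε (Fin.last (n + 1))) := by
    rw [← Finset.sum_smul, ← add_smul]
    congr 1
    rw [Fin.sum_univ_castSucc (f := fun k => D k k)]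
    simp [Finset.mul_sum, mul_add, neg_add, neg_mul]
    abel
  have hterm1 : ∀ i j : Fin n, (-(Real.sqrt 2 / 8) : ℝ) •
      (if i < j then (ε i.castSucc.castSucc * D i.castSucc j.castSucc - ε j.castSucc.castSucc * D j.castSucc i.castSucc) • theta3 eB ε (wedge3 (coComp i.castSucc.castSucc) (coComp j.castSucc.castSucc) (fun a => coComp (Fin.last n).castSucc a - coComp (Fin.last (n + 1)) a)) else 0)
      = (if i < j then (Real.sqrt 2 / 8 * (ε i.castSucc.castSucc * D j.castSucc i.castSucc - ε j.castSucc.castSucc * D i.castSucc j.castSucc)) • (Ev eB ε i.castSucc.castSucc * Ev eB ε j.castSucc.castSucc * Ev eB ε (Fin.last n).castSucc) else 0) + (if i < j then (Real.sqrt 2 / 8 * (ε i.castSucc.castSucc * D j.castSucc i.castSucc - ε j.castSucc.castSucc * D i.castSucc j.castSucc)) • (Ev eB ε i.castSucc.castSucc * Ev eB ε j.castSucc.castSucc * Ev eB ε (Fin.last (n + 1))) else 0) := by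
    intro i j
    split_ifs with h
    · rw [hT3a i j h]
      simp only [smul_add, smul_smul]
      congr 1
      · congr 1
        rcases hε i.castSucc.castSucc with h1 | h1 <;> rcases hε j.castSucc.castSucc with h2 | h2 <;>
          rw [h1, h2] <;> ring
      · congr 1
        rcases hε i.castSucc.castSucc with h1 | h1 <;> rcases hε j.castSucc.castSucc with h2 | h2 <;>
          rw [h1, h2] <;> ring
    · simp
  have e1 : (-(Real.sqrt 2 / 8) : ℝ) • (∑ i : Fin n, ∑ j : Fin n,
      if i < j then (ε i.castSucc.castSucc * D i.castSucc j.castSucc - ε j.castSucc.castSucc * D j.castSucc i.castSucc) • theta3 eB ε (wedge3 (coComp i.castSucc.castSucc) (coComp j.castSucc.castSucc) (fun a => coComp (Fin.last n).castSucc a - coComp (Fin.last (n + 1)) a)) else 0)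
      = (∑ i : Fin n, ∑ j : Fin n, if i < j then (Real.sqrt 2 / 8 * (ε i.castSucc.castSucc * D j.castSucc i.castSucc - ε j.castSucc.castSucc * D i.castSucc j.castSucc)) • (Ev eB ε i.castSucc.castSucc * Ev eB ε j.castSucc.castSucc * Ev eB ε (Fin.last n).castSucc) else 0)
        + (∑ i : Fin n, ∑ j : Fin n, if i < j then (Real.sqrt 2 / 8 * (ε i.castSucc.castSucc * D j.castSucc i.castSucc - ε j.castSucc.castSucc * D i.castSucc j.castSucc)) • (Ev eB ε i.castSucc.castSucc * Ev eB ε j.castSucc.castSucc * Ev eB ε (Fin.last (n + 1))) else 0) := by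
    rw [Finset.smul_sum]
    rw [← Finset.sum_add_distrib]
    refine Finset.sum_congr rfl fun i _ => ?_
    rw [Finset.smul_sum]
    rw [← Finset.sum_add_distrib]
    exact Finset.sum_congr rfl fun j _ => hterm1 i j
  have e2 : (1 / 4 : ℝ) • (∑ i : Fin n, (ε i.castSucc.castSucc * D i.castSucc (Fin.last n)) • theta3 eB ε (wedge3 (coComp i.castSucc.castSucc) (coComp (Fin.last n).castSucc) (coComp (Fin.last (n + 1)))))
      = (∑ x : Fin n, (-(1 / 4) * D x.castSucc (Fin.last n)) • (Ev eB ε x.castSucc.castSucc * Ev eB ε (Fin.last n).castSucc * Ev eB ε (Fin.last (n + 1)))) := by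
    rw [Finset.smul_sum]
    refine Finset.sum_congr rfl fun i _ => ?_
    rw [hT3b i, smul_smul, smul_smul]
    congr 1
    rcases hε i.castSucc.castSucc with h1 | h1 <;> rw [h1] <;> ring
  calc _ = ((∑ x : Fin n, ∑ x_1 : Fin n, if x < x_1 then (Real.sqrt 2 / 8 * (ε x.castSucc.castSucc * D x_1.castSucc x.castSucc - ε x_1.castSucc.castSucc * D x.castSucc x_1.castSucc)) • (Ev eB ε x.castSucc.castSucc * Ev eB ε x_1.castSucc.castSucc * Ev eB ε (Fin.last n).castSucc) else 0) + (∑ x : Fin n, ∑ x_1 : Fin n, if x < x_1 then (Real.sqrt 2 / 8 * (ε x.castSucc.castSucc * D x_1.castSucc x.castSucc - ε x_1.castSucc.castSucc * D x.castSucc x_1.castSucc)) • (Ev eB ε x.castSucc.castSucc * Ev eB ε x_1.castSucc.castSucc * Ev eB ε (Fin.last (n + 1))) else 0)) + (((∑ x : Fin n, (1 / 4 * D x.castSucc (Fin.last n)) • (Ev eB ε x.castSucc.castSucc * Ev eB ε (Fin.last n).castSucc * Ev eB ε (Fin.last (n + 1)))) + (∑ x : Fin n, (-(1 / 4) * (D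 x.castSucc (Fin.last n) + ε x.castSucc.castSucc * D (Fin.last n) x.castSucc)) • (Ev eB ε x.castSucc.castSucc * Ev eB ε (Fin.last n).castSucc * Ev eB ε (Fin.last (n + 1))))) + (∑ x : Fin n, (1 / 4 * (ε x.castSucc.castSucc * D (Fin.last n) x.castSucc - D x.castSucc (Fin.last n))) • (Ev eB ε x.castSucc.castSucc * Ev eB ε (Fin.last n).castSucc * Ev eB ε (Fin.last (n + 1))))) + ((∑ x : Fin n, (1 / 4 * (ε x.castSucc.castSucc * D (Fin.last n) x.castSucc)) • Ev eB ε x.castSucc.castSucc) + (∑ x : Fin n, (-(1 / 4) * (ε x.castSucc.castSucc * D (Fin.last n) x.castSucc)) • Ev eB ε x.castSucc.castSucc)) + ((∑ x : Fin n, (-(Real.sqrt 2 / 4) * D x.castSucc x.castSucc) • Ev eB ε (Fin.last n).castSucc) + ((-(Real.sqrt 2 / 4) * D (Fin.last n) (Fin.last n)) • Ev eB ε (Fin.last n).castSucc)) + ((∑ x : Fin n, (-(Real.sqrt 2 / 4) * D x.castSucc x.castSucc) • Ev eB ε (Fin.last (n + 1))) + ((-(Real.sqrt 2 / 4) * D (Fin.last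 n) (Fin.last n)) • Ev eB ε (Fin.last (n + 1)))) := by abel
    _ = _ := by
        rw [hDGJ, hFK, hBL, hCH, add_zero, hT1, ← e1, ← e2, smul_add, neg_smul, neg_smul]
        module

set_option maxHeartbeats 1000000 in
/-- Let `𝔤` be an `(n+2)`-dimensional real Lie algebra with basis
`v₀, …, v_{n+1}` such that `𝔥 := span{v₀,…,vₙ}` is an Abelian ideal and
`⁅v_{n+1}, vᵢ⁆ = Σ_k D_{ki} v_k` (an almost Abelian Lie algebra), equipped with the metric
`g = Σ_{i≤n−1} εᵢ v^i⊗v^i + v^n ⊙ v^{n+1}` for which `𝔥^⊥ = span{vₙ}` is null (isotropic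
case).  With the orthonormal basis `eᵢ = vᵢ` (`i ≤ n−1`), `eₙ = (vₙ+v_{n+1})/√2`,
`e_{n+1} = (vₙ−v_{n+1})/√2` (so `εₙ = 1`, `ε_{n+1} = −1`), the Dirac element computed
with respect to this orthonormal basis satisfies the stated formula. -/
theorem dirac_almost_abelian_isotropic
    (v eB : Module.Basis (Fin (n + 2)) ℝ 𝔤) (ε : Fin (n + 2) → ℝ)
    (D : Fin (n + 1) → Fin (n + 1) → ℝ)
    (c : Fin (n + 2) → Fin (n + 2) → Fin (n + 2) → ℝ)
    (hε : ∀ i, ε i = 1 ∨ ε i = -1)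
    (hεp : ε ((Fin.last n).castSucc) = 1)
    (hεq : ε (Fin.last (n + 1)) = -1)
    (habelian : ∀ i j : Fin (n + 1), ⁅v i.castSucc, v j.castSucc⁆ = 0)
    (hD : ∀ i : Fin (n + 1),
      ⁅v (Fin.last (n + 1)), v i.castSucc⁆ = ∑ k : Fin (n + 1), D k i • v k.castSucc)
    (he1 : ∀ i : Fin n, eB i.castSucc.castSucc = v i.castSucc.castSucc)
    (hep : eB ((Fin.last n).castSucc) =
      (Real.sqrt 2 / 2) • (v ((Fin.last n).castSucc) + v (Fin.last (n + 1))))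
    (heq : eB (Fin.last (n + 1)) =
      (Real.sqrt 2 / 2) • (v ((Fin.last n).castSucc) - v (Fin.last (n + 1))))
    (hc : ∀ a b, ⁅eB a, eB b⁆ = ∑ m, c m a b • eB m) :
    dirac eB ε c =
      (-(Real.sqrt 2 / 8)) •
          (∑ i : Fin n, ∑ j : Fin n,
            if i < j then
              (ε i.castSucc.castSucc * D i.castSucc j.castSucc -
                  ε j.castSucc.castSucc * D j.castSucc i.castSucc) •
                theta3 eB ε
                  (wedge3 (coComp i.castSucc.castSucc) (coComp j.castSucc.castSucc)
                    (fun a => coComp ((Fin.last n).castSucc) a - coComp (Fin.last (n + 1)) a))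
            else 0)
        + (1 / 4 : ℝ) •
            (∑ i : Fin n,
              (ε i.castSucc.castSucc * D i.castSucc (Fin.last n)) •
                theta3 eB ε
                  (wedge3 (coComp i.castSucc.castSucc) (coComp ((Fin.last n).castSucc))
                    (coComp (Fin.last (n + 1)))))
        - (Real.sqrt 2 / 4 * ∑ k, D k k) •
            theta1 eB ε
              (fun a => coComp ((Fin.last n).castSucc) a - coComp (Fin.last (n + 1)) a) := by
  have h2r : Real.sqrt 2 * Real.sqrt 2 = 2 := Real.mul_self_sqrt (by norm_num)
  have hPs : ∀ x : Fin n, (Fin.last n).castSucc ≠ x.castSucc.castSucc := by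
    intro x
    exact (Fin.castSucc_lt_castSucc_iff.mpr (Fin.castSucc_lt_last x)).ne'
  have hQs : ∀ x : Fin n, Fin.last (n + 1) ≠ x.castSucc.castSucc := by
    intro x
    exact (Fin.castSucc_lt_last _).ne'
  have hQP : Fin.last (n + 1) ≠ (Fin.last n).castSucc := (Fin.castSucc_lt_last _).ne'
  have hPQ : (Fin.last n).castSucc ≠ Fin.last (n + 1) := (Fin.castSucc_lt_last _).ne
  have hsP : ∀ x : Fin n, x.castSucc.castSucc ≠ (Fin.last n).castSucc := fun x => Ne.symm (hPs x)
  have hsQ : ∀ x : Fin n, x.castSucc.castSucc ≠ Fin.last (n + 1) := fun x => Ne.symm (hQs x)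
  have hlc : ∀ x : Fin n, Fin.last n ≠ x.castSucc := fun x => (Fin.castSucc_lt_last x).ne'
  have hvP : v ((Fin.last n).castSucc) =
      (Real.sqrt 2 / 2) • eB ((Fin.last n).castSucc) + (Real.sqrt 2 / 2) • eB (Fin.last (n + 1)) := by
    rw [hep, heq, smul_smul, smul_smul,
      show Real.sqrt 2 / 2 * (Real.sqrt 2 / 2) = 1 / 2 by linear_combination (1/4 : ℝ) * h2r]
    module
  have hrepr : ∀ m a b, c m a b = eB.repr ⁅eB a, eB b⁆ m := by
    intro m a b
    rw [hc a b, map_sum]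
    simp only [map_smul, Module.Basis.repr_self, Finsupp.smul_single, smul_eq_mul, mul_one]
    rw [Finset.sum_apply']
    simp [Finsupp.single_apply, Finset.sum_ite_eq']
  have extractS : ∀ (r : ℝ) (g : Fin n → ℝ) (rP rQ : ℝ) (m : Fin n),
      eB.repr (r • (∑ k : Fin n, g k • eB k.castSucc.castSucc)
        + rP • eB ((Fin.last n).castSucc) + rQ • eB (Fin.last (n + 1))) m.castSucc.castSucc
      = r * g m := by
    intro r g rP rQ m
    simp only [map_add, map_smul, map_sum, Module.Basis.repr_self]
    simp [Finsupp.single_apply, hsP, hsQ, hPQ, hQP, hPs, hQs, hlc, Fin.castSucc_inj,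
      Finset.sum_ite_eq', mul_comm]
  have extractP : ∀ (r : ℝ) (g : Fin n → ℝ) (rP rQ : ℝ),
      eB.repr (r • (∑ k : Fin n, g k • eB k.castSucc.castSucc)
        + rP • eB ((Fin.last n).castSucc) + rQ • eB (Fin.last (n + 1))) ((Fin.last n).castSucc)
      = rP := by
    intro r g rP rQ
    simp only [map_add, map_smul, map_sum, Module.Basis.repr_self]
    simp [Finsupp.single_apply, hsP, hsQ, hPQ, hQP, hPs, hQs, hlc]
  have extractQ : ∀ (r : ℝ) (g : Fin n → ℝ) (rP rQ : ℝ),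
      eB.repr (r • (∑ k : Fin n, g k • eB k.castSucc.castSucc)
        + rP • eB ((Fin.last n).castSucc) + rQ • eB (Fin.last (n + 1))) (Fin.last (n + 1))
      = rQ := by
    intro r g rP rQ
    simp only [map_add, map_smul, map_sum, Module.Basis.repr_self]
    simp [Finsupp.single_apply, hsP, hsQ, hPQ, hQP, hPs, hQs, hlc]
  have hbP : ∀ i : Fin (n + 1), ⁅v (Fin.last (n + 1)), v i.castSucc⁆ =
      (∑ k : Fin n, D k.castSucc i • eB k.castSucc.castSucc)
        + (Real.sqrt 2 / 2 * D (Fin.last n) i) • eB ((Fin.last n).castSucc)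
        + (Real.sqrt 2 / 2 * D (Fin.last n) i) • eB (Fin.last (n + 1)) := by
    intro i
    rw [hD i, Fin.sum_univ_castSucc (f := fun k => D k i • v k.castSucc)]
    simp only [← he1]
    rw [hvP, smul_add, smul_smul, smul_smul]
    module
  have X1 : ∀ i : Fin n, ⁅eB i.castSucc.castSucc, eB ((Fin.last n).castSucc)⁆ =
      (-(Real.sqrt 2 / 2)) • (∑ k : Fin n, D k.castSucc i.castSucc • eB k.castSucc.castSucc)
        + (-(Real.sqrt 2 / 2 * (Real.sqrt 2 / 2 * D (Fin.last n) i.castSucc))) •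
            eB ((Fin.last n).castSucc)
        + (-(Real.sqrt 2 / 2 * (Real.sqrt 2 / 2 * D (Fin.last n) i.castSucc))) •
            eB (Fin.last (n + 1)) := by
    intro i
    conv_lhs => rw [he1 i, hep, lie_smul, lie_add, habelian i.castSucc (Fin.last n),
      ← lie_skew (y := v (Fin.last (n + 1))), hbP i.castSucc]
    module
  have X2 : ∀ i : Fin n, ⁅eB i.castSucc.castSucc, eB (Fin.last (n + 1))⁆ =
      (Real.sqrt 2 / 2) • (∑ k : Fin n, D k.castSucc i.castSucc • eB k.castSucc.castSucc)
        + (Real.sqrt 2 / 2 * (Real.sqrt 2 / 2 * D (Fin.last n) i.castSucc)) •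
            eB ((Fin.last n).castSucc)
        + (Real.sqrt 2 / 2 * (Real.sqrt 2 / 2 * D (Fin.last n) i.castSucc)) •
            eB (Fin.last (n + 1)) := by
    intro i
    conv_lhs => rw [he1 i, heq, lie_smul, lie_sub, habelian i.castSucc (Fin.last n),
      ← lie_skew (y := v (Fin.last (n + 1))), hbP i.castSucc]
    module
  have X3 : ⁅eB ((Fin.last n).castSucc), eB (Fin.last (n + 1))⁆ =
      (Real.sqrt 2 / 2 * (Real.sqrt 2 / 2) * 2) •
          (∑ k : Fin n, D k.castSucc (Fin.last n) • eB k.castSucc.castSucc)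
        + (Real.sqrt 2 / 2 * (Real.sqrt 2 / 2) * 2 *
            (Real.sqrt 2 / 2 * D (Fin.last n) (Fin.last n))) • eB ((Fin.last n).castSucc)
        + (Real.sqrt 2 / 2 * (Real.sqrt 2 / 2) * 2 *
            (Real.sqrt 2 / 2 * D (Fin.last n) (Fin.last n))) • eB (Fin.last (n + 1)) := by
    conv_lhs => rw [hep, heq, smul_lie, lie_smul, lie_sub, add_lie, add_lie, lie_self,
      lie_self, ← lie_skew (y := v (Fin.last (n + 1))), hbP (Fin.last n)]
    module
  have hanti' : ∀ m a b, c m a b = -c m b a := by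
    intro m a b
    rw [hrepr, hrepr, ← lie_skew, map_neg]
    simp
  have hss' : ∀ m, ∀ i j : Fin n, c m i.castSucc.castSucc j.castSucc.castSucc = 0 := by
    intro m i j
    rw [hrepr, he1 i, he1 j, habelian i.castSucc j.castSucc]
    simp
  have hPP' : ∀ m, c m ((Fin.last n).castSucc) ((Fin.last n).castSucc) = 0 := by
    intro m
    rw [hrepr, lie_self]
    simp
  have hQQ' : ∀ m, c m (Fin.last (n + 1)) (Fin.last (n + 1)) = 0 := by
    intro m
    rw [hrepr, lie_self]
    simp
  have h1' : ∀ k i : Fin n, c k.castSucc.castSucc i.castSucc.castSucc ((Fin.last n).castSucc)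
      = -(Real.sqrt 2 / 2 * D k.castSucc i.castSucc) := by
    intro k i
    rw [hrepr, X1 i, extractS]
    ring
  have h2' : ∀ i : Fin n, c ((Fin.last n).castSucc) i.castSucc.castSucc ((Fin.last n).castSucc)
      = -(1 / 2 * D (Fin.last n) i.castSucc) := by
    intro i
    rw [hrepr, X1 i, extractP]
    linear_combination (-(D (Fin.last n) i.castSucc) / 4) * h2r
  have h3' : ∀ i : Fin n, c (Fin.last (n + 1)) i.castSucc.castSucc ((Fin.last n).castSucc)
      = -(1 / 2 * D (Fin.last n) i.castSucc) := by
    intro i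
    rw [hrepr, X1 i, extractQ]
    linear_combination (-(D (Fin.last n) i.castSucc) / 4) * h2r
  have h4' : ∀ k i : Fin n, c k.castSucc.castSucc i.castSucc.castSucc (Fin.last (n + 1))
      = Real.sqrt 2 / 2 * D k.castSucc i.castSucc := by
    intro k i
    rw [hrepr, X2 i, extractS]
  have h5' : ∀ i : Fin n, c ((Fin.last n).castSucc) i.castSucc.castSucc (Fin.last (n + 1))
      = 1 / 2 * D (Fin.last n) i.castSucc := by
    intro i
    rw [hrepr, X2 i, extractP]
    linear_combination (D (Fin.last n) i.castSucc / 4) * h2r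
  have h6' : ∀ i : Fin n, c (Fin.last (n + 1)) i.castSucc.castSucc (Fin.last (n + 1))
      = 1 / 2 * D (Fin.last n) i.castSucc := by
    intro i
    rw [hrepr, X2 i, extractQ]
    linear_combination (D (Fin.last n) i.castSucc / 4) * h2r
  have h7' : ∀ k : Fin n, c k.castSucc.castSucc ((Fin.last n).castSucc) (Fin.last (n + 1))
      = D k.castSucc (Fin.last n) := by
    intro k
    rw [hrepr, X3, extractS]
    linear_combination (D k.castSucc (Fin.last n) / 2) * h2r
  have h8' : c ((Fin.last n).castSucc) ((Fin.last n).castSucc) (Fin.last (n + 1))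
      = Real.sqrt 2 / 2 * D (Fin.last n) (Fin.last n) := by
    rw [hrepr, X3, extractP]
    linear_combination (Real.sqrt 2 / 4 * D (Fin.last n) (Fin.last n)) * h2r
  have h9' : c (Fin.last (n + 1)) ((Fin.last n).castSucc) (Fin.last (n + 1))
      = Real.sqrt 2 / 2 * D (Fin.last n) (Fin.last n) := by
    rw [hrepr, X3, extractQ]
    linear_combination (Real.sqrt 2 / 4 * D (Fin.last n) (Fin.last n)) * h2r
  exact dirac_formula eB ε D c hε hεp hεq hanti' hss' hPP' hQQ' h1' h2' h3' h4' h5' h6' h7'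
    h8' h9'


end
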